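/- Let G be a graph from the list L with vertex set V labeled by the standard convention, bundle B, and A ∈ A(G). Then every cover relation I ⋖ J in P^even_{G,A} with |J ∖ I| ≥ 3 satisfies 1 ≤ |(J ∖ I) ∩ V| ≤ 2, |(J ∖ I) ∩ (V ∖ {1,2})| ≤ 1, and 1 ≤ |(J ∖ I) ∩ B| ≤ 2. -/

import Mathlib

open Classical

set_option maxHeartbeats 1000000

/-- A finite multigraph without loops: `fst e` and `snd e` are the two (distinct)
endpoints of the edge `e`. -/
structure Multigraph where
  V : Type
  E : Type
  [fintypeV : Fintype V]
  [decEqV : DecidableEq V]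
  [fintypeE : Fintype E]
  [decEqE : DecidableEq E]
  fst : E → V
  snd : E → V
  no_loop : ∀ e, fst e ≠ snd e

attribute [instance] Multigraph.fintypeV Multigraph.decEqV Multigraph.fintypeE Multigraph.decEqE

namespace Multigraph

variable (G : Multigraph)

/-- The ground set: vertices together with edges. -/
abbrev El : Type := G.V ⊕ G.E

/-- Two edges have the same (unordered) pair of endpoints. -/
def sameEnds (e e' : G.E) : Prop :=
  (G.fst e = G.fst e' ∧ G.snd e = G.snd e') ∨ (G.fst e = G.snd e' ∧ G.snd e = G.fst e')

/-- An edge is a multiple edge if some other edge has the same endpoints. -/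
def Multiple (e : G.E) : Prop := ∃ e', e' ≠ e ∧ G.sameEnds e e'

/-- A simple graph has no multiple edges. -/
def Simple : Prop := ∀ e, ¬ G.Multiple e

/-- A bundle: a maximal set of multiple edges with the same pair of endpoints. -/
def IsBundle (B : Set G.E) : Prop := ∃ e, G.Multiple e ∧ B = {e' | G.sameEnds e e'}

/-- Adjacency of vertices. -/
def adj (u v : G.V) : Prop :=
  ∃ e, (G.fst e = u ∧ G.snd e = v) ∨ (G.fst e = v ∧ G.snd e = u)

def reachable : G.V → G.V → Prop := Relation.ReflTransGen G.adj

def Connected : Prop := Nonempty G.V ∧ ∀ u v : G.V, G.reachable u v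

/-- Existence of a walk of length exactly `k`. -/
def reachN (G : Multigraph) : ℕ → G.V → G.V → Prop
  | 0, u, v => u = v
  | k + 1, u, v => ∃ w, G.adj u w ∧ G.reachN k w v

/-- Graph distance. -/
noncomputable def dist (u v : G.V) : ℕ := sInf {k | G.reachN k u v}

def adjOn (W : Set G.V) (u v : G.V) : Prop := u ∈ W ∧ v ∈ W ∧ G.adj u v

/-- The set `W` of vertices induces a connected subgraph. -/
def ConnectedOn (W : Set G.V) : Prop :=
  ∀ u ∈ W, ∀ w ∈ W, Relation.ReflTransGen (G.adjOn W) u w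

/-- The subset of the ground set representing the whole graph:
all vertices together with all multiple edges. -/
def topSet : Set G.El := {x | ∀ e, x = Sum.inr e → G.Multiple e}

/-- `S ⊆ C_G` represents a semi-induced subgraph: its edges are multiple edges with both
endpoints among its vertices, and between any two of its vertices joined by a bundle of `G`
it contains at least one edge of the bundle (simple edges are implicitly included). -/
def SemiInduced (S : Set G.El) : Prop :=
  (∀ e, Sum.inr e ∈ S → G.Multiple e ∧ Sum.inl (G.fst e) ∈ S ∧ Sum.inl (G.snd e) ∈ S) ∧
  (∀ e, G.Multiple e → Sum.inl (G.fst e) ∈ S → Sum.inl (G.snd e) ∈ S →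
    ∃ e', G.sameEnds e e' ∧ Sum.inr e' ∈ S)

/-- Adjacency of two vertices inside the semi-induced subgraph represented by `S`. -/
def adjIn (S : Set G.El) (u v : G.V) : Prop :=
  Sum.inl u ∈ S ∧ Sum.inl v ∈ S ∧
    ∃ e, ((G.fst e = u ∧ G.snd e = v) ∨ (G.fst e = v ∧ G.snd e = u)) ∧
      (G.Multiple e → Sum.inr e ∈ S)

/-- The connected component of the vertex `v` inside the semi-induced subgraph `S`,
as a subset of the ground set. -/
def componentIn (S : Set G.El) (v : G.V) : Set G.El :=
  {x | (∃ u, x = Sum.inl u ∧ Relation.ReflTransGen (G.adjIn S) v u) ∨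
       (∃ e, x = Sum.inr e ∧ Sum.inr e ∈ S ∧ Relation.ReflTransGen (G.adjIn S) v (G.fst e))}

/-- `S` is an `A`-even semi-induced subgraph. -/
def AEvenMember (A S : Set G.El) : Prop :=
  G.SemiInduced S ∧ ∀ v, Sum.inl v ∈ S → Even ((G.componentIn S v ∩ A).ncard)

/-- `A` is an admissible collection for `G`. -/
def Admissible (A : Set G.El) : Prop :=
  (∀ e, Sum.inr e ∈ A → G.Multiple e) ∧
  (∀ v : G.V, Even ({u : G.V | G.reachable v u ∧ Sum.inl u ∈ A}.ncard)) ∧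
  (∀ v : G.V, (∀ e, (G.fst e = v ∨ G.snd e = v) → ¬ G.Multiple e) → Sum.inl v ∈ A) ∧
  (∀ e, G.Multiple e →
    (∃ e', G.sameEnds e e' ∧ Sum.inr e' ∈ A) ∧
      Even ({e' | G.sameEnds e e' ∧ Sum.inr e' ∈ A}.ncard))

end Multigraph

/-- The poset of `A`-even semi-induced subgraphs of `G`, including `∅` and `G` itself,
ordered by containment. -/
def EvenPoset (G : Multigraph) (A : Set G.El) : Type :=
  {S : Set G.El // S = ∅ ∨ S = G.topSet ∨ G.AEvenMember A S}

namespace EvenPoset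

instance (G : Multigraph) (A : Set G.El) : PartialOrder (EvenPoset G A) :=
  Subtype.partialOrder _

instance (G : Multigraph) (A : Set G.El) : BoundedOrder (EvenPoset G A) where
  top := ⟨G.topSet, Or.inr (Or.inl rfl)⟩
  le_top := by
    rintro ⟨S, hS⟩
    show S ⊆ G.topSet
    rcases hS with rfl | rfl | hS
    · exact Set.empty_subset _
    · exact subset_rfl
    · intro x hx
      intro e he
      subst he
      exact (hS.1.1 e hx).1
  bot := ⟨(∅ : Set G.El), Or.inl rfl⟩
  bot_le := by
    rintro ⟨S, hS⟩
    show (∅ : Set G.El) ⊆ S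
    exact Set.empty_subset _

end EvenPoset
/-- An isomorphism of multigraphs. -/
structure Multigraph.Iso (G H : Multigraph) where
  vEquiv : G.V ≃ H.V
  eEquiv : G.E ≃ H.E
  ends : ∀ e, (H.fst (eEquiv e) = vEquiv (G.fst e) ∧ H.snd (eEquiv e) = vEquiv (G.snd e)) ∨
              (H.fst (eEquiv e) = vEquiv (G.snd e) ∧ H.snd (eEquiv e) = vEquiv (G.fst e))

/-- The connected component of the vertex `v`, as a multigraph. -/
noncomputable def Multigraph.componentGraph (G : Multigraph) (v : G.V) : Multigraph where
  V := {u // G.reachable v u}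
  E := {e // G.reachable v (G.fst e)}
  fintypeV := Fintype.ofFinite _
  decEqV := fun a b => decidable_of_iff (a.1 = b.1) Subtype.ext_iff.symm
  fintypeE := Fintype.ofFinite _
  decEqE := fun a b => decidable_of_iff (a.1 = b.1) Subtype.ext_iff.symm
  fst := fun e => ⟨G.fst e.1, e.2⟩
  snd := fun e => ⟨G.snd e.1, Relation.ReflTransGen.tail e.2 ⟨e.1, Or.inl ⟨rfl, rfl⟩⟩⟩
  no_loop := fun e h => G.no_loop e.1 (congrArg Subtype.val h)

/-- A specification of a partial underlying induced subgraph (PI-graph) of `G`: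
a set `W` of vertices together with a set `R` of retained edges, such that every `G`-edge
between vertices of `W` has a parallel retained edge, and each bundle inside `W`
is either fully retained or replaced by a single (simple) edge. -/
structure PISpec (G : Multigraph) where
  W : Set G.V
  R : Set G.E
  endpoints_mem : ∀ e ∈ R, G.fst e ∈ W ∧ G.snd e ∈ W
  keeps : ∀ e, G.fst e ∈ W → G.snd e ∈ W → ∃ e' ∈ R, G.sameEnds e e'
  bundle_cond : ∀ e ∈ R, (∀ e', G.sameEnds e e' → e' ∈ R) ∨ (∀ e' ∈ R, G.sameEnds e e' → e' = e)

/-- The PI-graph determined by a `PISpec`. -/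
noncomputable def PISpec.toGraph {G : Multigraph} (s : PISpec G) : Multigraph where
  V := {v // v ∈ s.W}
  E := {e // e ∈ s.R}
  fintypeV := Fintype.ofFinite _
  decEqV := fun a b => decidable_of_iff (a.1 = b.1) Subtype.ext_iff.symm
  fintypeE := Fintype.ofFinite _
  decEqE := fun a b => decidable_of_iff (a.1 = b.1) Subtype.ext_iff.symm
  fst := fun e => ⟨G.fst e.1, (s.endpoints_mem e.1 e.2).1⟩
  snd := fun e => ⟨G.snd e.1, (s.endpoints_mem e.1 e.2).2⟩
  no_loop := fun e h => G.no_loop e.1 (congrArg Subtype.val h)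

section Shelling

variable {α : Type*}

/-- A finset is a chain of the poset. -/
def IsChainFinset [Preorder α] (s : Finset α) : Prop :=
  ∀ x ∈ s, ∀ y ∈ s, x ≤ y ∨ y ≤ x

/-- The order complex of a poset: the complex of its chains. -/
def orderComplex (α : Type*) [Preorder α] : Set (Finset α) := {s | IsChainFinset s}

/-- A facet (maximal face) of a simplicial complex. -/
def IsFacet (K : Set (Finset α)) (F : Finset α) : Prop :=
  F ∈ K ∧ ∀ F' ∈ K, F ⊆ F' → F = F'

/-- `l` is a shelling order of the complex `K` (nonpure shellability of Björner–Wachs):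
it enumerates the facets of `K` so that for every `k ≥ 1`, the intersection of the `k`-th
facet with the union of the earlier ones is pure of dimension `dim F_k - 1`. -/
def IsShelling (K : Set (Finset α)) (l : List (Finset α)) : Prop :=
  l.Nodup ∧ (∀ F, F ∈ l ↔ IsFacet K F) ∧
  ∀ k (hk : k < l.length), 1 ≤ k →
    ∀ S : Finset α, S ⊆ l.get ⟨k, hk⟩ →
      (∃ i, ∃ hi : i < l.length, i < k ∧ S ⊆ l.get ⟨i, hi⟩) →
      ∃ T : Finset α, T ⊆ l.get ⟨k, hk⟩ ∧ T.card + 1 = (l.get ⟨k, hk⟩).card ∧ S ⊆ T ∧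
        ∃ i, ∃ hi : i < l.length, i < k ∧ T ⊆ l.get ⟨i, hi⟩

def ComplexShellable (K : Set (Finset α)) : Prop := ∃ l, IsShelling K l

/-- A poset is shellable if its order complex is shellable. -/
def PosetShellable (α : Type*) [Preorder α] : Prop := ComplexShellable (orderComplex α)

end Shelling

/-- The family `𝒢*`: all graphs `G` such that the poset of `A`-even subgraphs is shellable
for every PI-graph `H` of `G` and every admissible collection `A` of `H`. -/
def GStar (G : Multigraph) : Prop :=
  ∀ s : PISpec G, ∀ A : Set s.toGraph.El,
    s.toGraph.Admissible A → PosetShellable (EvenPoset s.toGraph A)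
/-- A graph on vertex set `Fin n` with a bundle of `m` parallel edges between the
vertices `0` and `1`, and `k` further simple edges given by the endpoint functions `f, g`. -/
def mkGraph (n m k : ℕ) (hn : 2 ≤ n) (f g : ℕ → ℕ)
    (hf : ∀ i, i < k → f i < n) (hg : ∀ i, i < k → g i < n)
    (hfg : ∀ i, i < k → f i ≠ g i) : Multigraph where
  V := Fin n
  E := Fin m ⊕ Fin k
  fst := Sum.elim (fun _ => ⟨0, by omega⟩) (fun i => ⟨f i.1, hf i.1 i.2⟩)
  snd := Sum.elim (fun _ => ⟨1, by omega⟩) (fun i => ⟨g i.1, hg i.1 i.2⟩)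
  no_loop := by
    rintro (e | e) h
    · have h0 : (0 : ℕ) = 1 := congrArg Fin.val h
      omega
    · exact hfg e.1 e.2 (congrArg Fin.val h)

/-- `P̃_{n+2,m}`: the path on `n+2` vertices `0,1,…,n+1` whose first edge is replaced by a
bundle of `m` parallel edges between `0` and `1`. -/
def tildeP (n m : ℕ) : Multigraph :=
  mkGraph (n + 2) m n (by omega) (fun i => i + 1) (fun i => i + 2)
    (fun i hi => by (try dsimp only); omega) (fun i hi => by (try dsimp only); omega) (fun i hi => by (try dsimp only); omega)

/-- `P̃′_{n+3,m}`: `P̃_{n+3,m}` with an extra simple edge `u₁u₃` (i.e. between `0` and `2`). -/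
def tildeP' (n m : ℕ) : Multigraph :=
  mkGraph (n + 3) m (n + 2) (by omega)
    (fun i => if i ≤ n then i + 1 else 0)
    (fun i => if i ≤ n then i + 2 else 2)
    (fun i hi => by (try dsimp only); split_ifs <;> omega)
    (fun i hi => by (try dsimp only); split_ifs <;> omega)
    (fun i hi => by (try dsimp only); split_ifs <;> omega)

/-- `S̃_{2j+5,m}`: the bundle `0,1`, the path `1,2,…,2j+3`, and a pendant vertex `2j+4`
attached to `2j+2`. -/
def tildeS (j m : ℕ) : Multigraph :=
  mkGraph (2*j + 5) m (2*j + 3) (by omega)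
    (fun i => if i < 2*j + 2 then i + 1 else 2*j + 2)
    (fun i => if i < 2*j + 2 then i + 2 else 2*j + 4)
    (fun i hi => by (try dsimp only); split_ifs <;> omega)
    (fun i hi => by (try dsimp only); split_ifs <;> omega)
    (fun i hi => by (try dsimp only); split_ifs <;> omega)

/-- `T̃_{2j+5,m}`: `S̃_{2j+5,m}` with the extra edge between `2j+3` and `2j+4`. -/
def tildeT (j m : ℕ) : Multigraph :=
  mkGraph (2*j + 5) m (2*j + 4) (by omega)
    (fun i => if i < 2*j + 2 then i + 1 else if i = 2*j + 2 then 2*j + 2 else 2*j + 3)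
    (fun i => if i < 2*j + 2 then i + 2 else 2*j + 4)
    (fun i hi => by (try dsimp only); split_ifs <;> omega)
    (fun i hi => by (try dsimp only); split_ifs <;> omega)
    (fun i hi => by (try dsimp only); split_ifs <;> omega)

/-- `S̃′_{2j+5,m}`: `S̃_{2j+5,m}` with an extra simple edge between `0` and `2`. -/
def tildeS' (j m : ℕ) : Multigraph :=
  mkGraph (2*j + 5) m (2*j + 4) (by omega)
    (fun i => if i < 2*j + 2 then i + 1 else if i = 2*j + 2 then 2*j + 2 else 0)
    (fun i => if i < 2*j + 2 then i + 2 else if i = 2*j + 2 then 2*j + 4 else 2)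
    (fun i hi => by (try dsimp only); split_ifs <;> omega)
    (fun i hi => by (try dsimp only); split_ifs <;> omega)
    (fun i hi => by (try dsimp only); split_ifs <;> omega)

/-- `T̃′_{2j+5,m}`: `T̃_{2j+5,m}` with an extra simple edge between `0` and `2`. -/
def tildeT' (j m : ℕ) : Multigraph :=
  mkGraph (2*j + 5) m (2*j + 5) (by omega)
    (fun i => if i < 2*j + 2 then i + 1 else if i = 2*j + 2 then 2*j + 2 else
      if i = 2*j + 3 then 2*j + 3 else 0)
    (fun i => if i < 2*j + 2 then i + 2 else if i ≤ 2*j + 3 then 2*j + 4 else 2)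
    (fun i hi => by (try dsimp only); split_ifs <;> omega)
    (fun i hi => by (try dsimp only); split_ifs <;> omega)
    (fun i hi => by (try dsimp only); split_ifs <;> omega)

/-- `G` is isomorphic to one of the unprimed graphs `P̃`, `S̃`, `T̃` of the list `L`. -/
def InL0 (G : Multigraph) : Prop :=
  ∃ m, 2 ≤ m ∧
    ((∃ n, Nonempty (G.Iso (tildeP n m))) ∨ (∃ j, Nonempty (G.Iso (tildeS j m))) ∨
      (∃ j, Nonempty (G.Iso (tildeT j m))))

/-- `G` is isomorphic to one of the primed graphs `P̃′`, `S̃′`, `T̃′` of the list `L`. -/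
def InL1 (G : Multigraph) : Prop :=
  ∃ m, 2 ≤ m ∧
    ((∃ n, Nonempty (G.Iso (tildeP' n m))) ∨ (∃ j, Nonempty (G.Iso (tildeS' j m))) ∨
      (∃ j, Nonempty (G.Iso (tildeT' j m))))

/-- `G` is isomorphic to one of the graphs of the list `L`. -/
def InListL (G : Multigraph) : Prop := InL0 G ∨ InL1 G
section CL

variable (P : Type*) [PartialOrder P]

/-- `c` is a saturated chain from `x` to `y`: consecutive elements are covers. -/
def SatChain (x y : P) (c : List P) : Prop :=
  c.Chain' (· ⋖ ·) ∧ c.head? = some x ∧ c.getLast? = some y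

variable [BoundedOrder P]

/-- A maximal chain of the bounded poset `P`. -/
def MaxChain : Type _ := {c : List P // SatChain P ⊥ ⊤ c}

variable {P}

/-- The maximal chain `σ` extends the root `r` (a saturated chain from `⊥` to some `x`)
followed by the saturated chain `c` (from `x` to some `y`). -/
def ChainExtends (σ : MaxChain P) (r c : List P) : Prop := (r ++ c.tail) <+: σ.1

/-- A chain-edge labeling: two maximal chains that coincide along their bottom `d` covers
receive the same labels on those covers. `lab σ i` is the label of the `i`-th cover
of the maximal chain `σ`. -/
def IsChainEdgeLabeling {L : Type} [PartialOrder L] (lab : MaxChain P → ℕ → L) : Prop :=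
  ∀ σ τ : MaxChain P, ∀ d : ℕ, σ.1.take (d + 1) = τ.1.take (d + 1) →
    ∀ i, i < d → lab σ i = lab τ i

/-- The chain `c` of the interval rooted at `r` is strictly increasing with respect
to the labeling `lab`. -/
def SegIncreasing {L : Type} [PartialOrder L] (lab : MaxChain P → ℕ → L)
    (r c : List P) : Prop :=
  ∃ σ : MaxChain P, ChainExtends σ r c ∧
    ∀ i, r.length ≤ i + 1 → i + 4 ≤ r.length + c.length → lab σ i < lab σ (i + 1)

/-- The sequence of labels of the covers of the chain `c` in the interval rooted at `r`,
read off along the extending maximal chain `σ`. -/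
def SegLabels {L : Type} (lab : MaxChain P → ℕ → L) (σ : MaxChain P)
    (r c : List P) : List L :=
  (List.range (c.length - 1)).map fun i => lab σ (r.length - 1 + i)

/-- A CL-labeling: a chain-edge labeling such that in every rooted interval there is a
unique strictly increasing maximal chain, and it lexicographically precedes all other
maximal chains of the rooted interval. -/
def IsCLLabeling {L : Type} [PartialOrder L] (lab : MaxChain P → ℕ → L) : Prop :=
  IsChainEdgeLabeling lab ∧
  ∀ x y : P, x ≤ y → ∀ r : List P, SatChain P ⊥ x r →
    ∃ c : List P, SatChain P x y c ∧ SegIncreasing lab r c ∧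
      ∀ c' : List P, SatChain P x y c' → c' ≠ c →
        ¬ SegIncreasing lab r c' ∧
        ∀ σ σ' : MaxChain P, ChainExtends σ r c → ChainExtends σ' r c' →
          List.Lex (· < ·) (SegLabels lab σ r c) (SegLabels lab σ' r c')

/-- A bounded poset is CL-shellable if it admits a CL-labeling. -/
def CLShellable (P : Type*) [PartialOrder P] [BoundedOrder P] : Prop :=
  ∃ (L : Type) (_ : LinearOrder L) (lab : MaxChain P → ℕ → L), IsCLLabeling lab

end CL

/-- `IntervalRAO x y l`: the list `l` is a recursive atom ordering of the interval `[x,y]`. -/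
inductive IntervalRAO {P : Type*} [PartialOrder P] : P → P → List P → Prop where
  | base : ∀ {x y : P}, x ⋖ y → IntervalRAO x y [y]
  | step : ∀ {x y : P} (l : List P) (ls : ℕ → List P), x < y → ¬ x ⋖ y → l.Nodup →
      (∀ z, z ∈ l ↔ (x ⋖ z ∧ z ≤ y)) →
      (∀ j, ∀ hj : j < l.length, IntervalRAO (l.get ⟨j, hj⟩) y (ls j)) →
      (∀ j, j < l.length →
        ∃ d, ∀ k, ∀ hk : k < (ls j).length,
          (k < d ↔ ∃ i, ∃ hi : i < l.length, i < j ∧ l.get ⟨i, hi⟩ ≤ (ls j).get ⟨k, hk⟩)) →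
      (∀ i j, ∀ hi : i < l.length, ∀ hj : j < l.length, i < j →
        ∀ w, l.get ⟨i, hi⟩ ≤ w → l.get ⟨j, hj⟩ ≤ w → w ≤ y →
          ∃ k, k < j ∧ ∃ hk : k < l.length, ∃ z, l.get ⟨j, hj⟩ ⋖ z ∧ z ≤ w ∧
            l.get ⟨k, hk⟩ < z) →
      IntervalRAO x y l

/-- A bounded poset admits a recursive atom ordering. -/
def HasRAO (P : Type*) [PartialOrder P] [BoundedOrder P] : Prop :=
  ∃ l : List P, IntervalRAO (⊥ : P) ⊤ l
/-- The standard labeling convention for a graph `G` of the list `L` together with an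
admissible collection `A`: the vertices are `v 1, …, v n` with the bundle between
`v 1` and `v 2`, the elements of `B ∩ A` are `ea 1, …, ea twoM`, the elements of
`B ∖ A` are `eb 1, …, eb ell`, each vertex `v i` (`i ≥ 3`) is closest to `v (i-1)`,
`v 1 ∉ A` when `n` is odd, and `v 1` is adjacent to `v 3` when `n` is even. -/
structure StdLabeling (G : Multigraph) (A : Set G.El) where
  n : ℕ
  twoM : ℕ
  ell : ℕ
  hn : 2 ≤ n
  v : ℕ → G.V
  ea : ℕ → G.E
  eb : ℕ → G.E
  vbij : Set.BijOn v (Set.Icc 1 n) Set.univ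
  eabij : Set.BijOn ea (Set.Icc 1 twoM) {e | G.Multiple e ∧ Sum.inr e ∈ A}
  ebbij : Set.BijOn eb (Set.Icc 1 ell) {e | G.Multiple e ∧ Sum.inr e ∉ A}
  bundleEnds : ∀ e, G.Multiple e ↔
    ((G.fst e = v 1 ∧ G.snd e = v 2) ∨ (G.fst e = v 2 ∧ G.snd e = v 1))
  closest : ∀ i, 3 ≤ i → i ≤ n → ∀ j, i ≤ j → j ≤ n →
    G.dist (v (i - 1)) (v i) ≤ G.dist (v (i - 1)) (v j)
  oddA : Odd n → Sum.inl (v 1) ∉ A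
  evenAdj : Even n → 3 ≤ n → G.adj (v 1) (v 3)

namespace StdLabeling

variable {G : Multigraph} {A : Set G.El} (L : StdLabeling G A)

/-- The label of a vertex. -/
noncomputable def vIdx (w : G.V) : ℕ := sInf {i | 1 ≤ i ∧ i ≤ L.n ∧ L.v i = w}

/-- The index of an edge of `B ∩ A`. -/
noncomputable def aIdx (e : G.E) : ℕ := sInf {i | 1 ≤ i ∧ i ≤ L.twoM ∧ L.ea i = e}

/-- The index of an edge of `B ∖ A`. -/
noncomputable def bIdx (e : G.E) : ℕ := sInf {i | 1 ≤ i ∧ i ≤ L.ell ∧ L.eb i = e}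

/-- The rank of a ground element in the total order `≺_I` on `V ∪ B`. -/
noncomputable def rank (I : Set G.El) : G.El → ℕ :=
  if ∀ e : G.E, Sum.inr e ∉ I then
    Sum.elim (fun w => L.vIdx w)
      (fun e => if Sum.inr e ∈ A then L.n + L.aIdx e else L.n + L.twoM + L.bIdx e)
  else if ∀ e : G.E, Sum.inr e ∈ I → Sum.inr e ∈ A then
    Sum.elim
      (fun w => if L.vIdx w ≤ 2 then L.vIdx w
        else sSup {i | 1 ≤ i ∧ i ≤ L.twoM ∧ Sum.inr (L.ea i) ∈ I} + L.vIdx w)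
      (fun e => if Sum.inr e ∈ A then
          (if L.aIdx e ≤ sSup {i | 1 ≤ i ∧ i ≤ L.twoM ∧ Sum.inr (L.ea i) ∈ I}
            then 2 + L.aIdx e else L.n + L.aIdx e)
        else L.n + L.twoM + L.bIdx e)
  else
    Sum.elim
      (fun w => if L.vIdx w ≤ 2 then L.vIdx w
        else L.twoM + sSup {i | 1 ≤ i ∧ i ≤ L.ell ∧ Sum.inr (L.eb i) ∈ I} + L.vIdx w)
      (fun e => if Sum.inr e ∈ A then 2 + L.aIdx e
        else (if L.bIdx e ≤ sSup {i | 1 ≤ i ∧ i ≤ L.ell ∧ Sum.inr (L.eb i) ∈ I}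
          then 2 + L.twoM + L.bIdx e else L.n + L.twoM + L.bIdx e))

end StdLabeling

/-- The set `S` lexicographically precedes the set `T`, comparing the sorted sequences of
ranks of their elements. -/
noncomputable def setLex {G : Multigraph} (f : G.El → ℕ) (S T : Set G.El) : Prop :=
  List.Lex (· < ·)
    (Finset.sort (Finset.image f (Set.toFinite S).toFinset) (· ≤ ·))
    (Finset.sort (Finset.image f (Set.toFinite T).toFinset) (· ≤ ·))

namespace StdLabeling

variable {G : Multigraph} {A : Set G.El} (L : StdLabeling G A)

/-- The pair of endpoints of the bundle, as ground-set elements. -/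
def v12set : Set G.El := {Sum.inl (L.v 1), Sum.inl (L.v 2)}

/-- The atom ordering `J ≺_atom^I J'` of the atoms of the interval `[I, G]`. -/
noncomputable def atomPrec (I J J' : EvenPoset G A) : Prop :=
  (((J.1 \ I.1) ∩ L.v12set).ncard = 1 ∧ ((J'.1 \ I.1) ∩ L.v12set).ncard = 2) ∨
    setLex (L.rank I.1) (J.1 \ I.1) (J'.1 \ I.1)

/-- `c` is a falling maximal chain of the poset of `A`-even subgraphs, with respect to the
integer CL-labeling obtained from the recursive atom orderings `≺_atom` by the standard
Björner–Wachs construction: a maximal chain is falling iff each element `x_{t+1}` of the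
chain lies above an atom of `[x_{t-1}, ⊤]` that precedes `x_t` in `≺_atom^{x_{t-1}}`. -/
noncomputable def Falling (c : List (EvenPoset G A)) : Prop :=
  SatChain (EvenPoset G A) ⊥ ⊤ c ∧
  ∀ t, ∀ _ : 1 ≤ t, ∀ h2 : t + 1 < c.length,
    ∃ z : EvenPoset G A,
      c.get ⟨t - 1, by omega⟩ ⋖ z ∧
      L.atomPrec (c.get ⟨t - 1, by omega⟩) z (c.get ⟨t, by omega⟩) ∧
      z ≤ c.get ⟨t + 1, h2⟩

end StdLabeling
/-- `e` is an element of `B ∩ A` (a multiple edge belonging to `A`). -/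
def Multigraph.inBA (G : Multigraph) (A : Set G.El) (e : G.E) : Prop :=
  G.Multiple e ∧ Sum.inr e ∈ A

/-- `e` is an element of `B ∖ A` (a multiple edge not belonging to `A`). -/
def Multigraph.inBnA (G : Multigraph) (A : Set G.El) (e : G.E) : Prop :=
  G.Multiple e ∧ Sum.inr e ∉ A

/-- `i` is the index of the smallest-labelled vertex outside `I ∪ {v 1, v 2}`,
i.e. `v i = min (V ∖ (I ∪ {1,2}))`. -/
def StdLabeling.vminP {G : Multigraph} {A : Set G.El} (L : StdLabeling G A)
    (I : Set G.El) (i : ℕ) : Prop :=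
  3 ≤ i ∧ i ≤ L.n ∧ Sum.inl (L.v i) ∉ I ∧ ∀ j, 3 ≤ j → j < i → Sum.inl (L.v j) ∈ I

/-!
Write `D = J ∖ I`. A poset element strictly between `I` and `J` contradicts the cover, and since
`I` is `A`-even, `I ∪ F` (for `F ⊆ D`) is `A`-even as soon as it is semi-induced, `F` lies in one
of its components and `|F ∩ A|` is even. Hence every element of `D` that can be added to `I` on
its own lies in `A`, and a new vertex `w ∈ A` has, by parity of its component in `J`, a partner
in `D ∩ A`; the first new element met on a path from `w` towards it can be added together
with `w`. This excludes new vertices unless the bundle `B` between `1` and `2` interferes: its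
edges need both ends, and two present ends need one of its edges. If exactly one end is new, it
can only be added together with all new edges of `B`, so that block meets `A` oddly and becomes
addable once a new vertex of `A` joins it. Finally, three new edges of `B` are excluded by
removing two of the same status from `J`.
-/

theorem Relation.ReflTransGen.restrict_or_exists_exit {α : Type*} {r : α → α → Prop}
    {p : α → Prop} {a b : α} (h : Relation.ReflTransGen r a b) (ha : p a) :
    (Relation.ReflTransGen (fun x y => r x y ∧ p x ∧ p y) a b ∧ p b) ∨
      ∃ x y, Relation.ReflTransGen (fun x y => r x y ∧ p x ∧ p y) a x ∧ p x ∧ r x y ∧ ¬ p y := by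
  induction h with
  | refl => exact Or.inl ⟨.refl, ha⟩
  | @tail b c _ hbc ih =>
    rcases ih with ⟨hab, hb⟩ | hexit
    · by_cases hc : p c
      · exact Or.inl ⟨hab.tail ⟨hbc, hb, hc⟩, hc⟩
      · exact Or.inr ⟨b, c, hab, hb, hbc, hc⟩
    · exact Or.inr hexit

namespace Multigraph

/-- `G.adj u v` unfolds to `∃ e, G.Joins e u v`. -/
def Joins (G : Multigraph) (e : G.E) (u v : G.V) : Prop :=
  (G.fst e = u ∧ G.snd e = v) ∨ (G.fst e = v ∧ G.snd e = u)

/-- At most one bundle, between `a` and `b`; this is `StdLabeling.bundleEnds`. -/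
def BundleEnds (G : Multigraph) (a b : G.V) : Prop := ∀ e, G.Multiple e ↔ G.Joins e a b

variable {G : Multigraph}

section Edges

variable {e e' e'' : G.E} {u v : G.V}

theorem Joins.symm (h : G.Joins e u v) : G.Joins e v u := Or.symm h

theorem joins_fst_snd (e : G.E) : G.Joins e (G.fst e) (G.snd e) := Or.inl ⟨rfl, rfl⟩

theorem Joins.ends_iff (p : G.V → Prop) (h : G.Joins e u v) :
    p (G.fst e) ∧ p (G.snd e) ↔ p u ∧ p v := by
  rcases h with ⟨rfl, rfl⟩ | ⟨rfl, rfl⟩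
  exacts [Iff.rfl, and_comm]

theorem sameEnds_iff_joins : G.sameEnds e e' ↔ G.Joins e' (G.fst e) (G.snd e) := by
  unfold Joins sameEnds
  grind

theorem sameEnds_of_joins (h : G.Joins e u v) (h' : G.Joins e' u v) : G.sameEnds e e' := by
  unfold Joins sameEnds at *
  grind

theorem Joins.of_sameEnds (h : G.Joins e u v) (he : G.sameEnds e e') : G.Joins e' u v := by
  unfold Joins sameEnds at *
  grind

theorem sameEnds_symm (h : G.sameEnds e e') : G.sameEnds e' e := by
  unfold sameEnds at *
  grind

theorem sameEnds_trans (h : G.sameEnds e e') (h' : G.sameEnds e' e'') : G.sameEnds e e'' := by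
  unfold sameEnds at *
  grind

theorem Multiple.of_sameEnds (he : G.Multiple e) (h : G.sameEnds e e') : G.Multiple e' := by
  by_cases h' : e' = e
  · exact h' ▸ he
  · exact ⟨e, Ne.symm h', sameEnds_symm h⟩

theorem BundleEnds.symm {a b : G.V} (hB : G.BundleEnds a b) : G.BundleEnds b a :=
  fun e => (hB e).trans ⟨Joins.symm, Joins.symm⟩

theorem BundleEnds.multiple_iff_sameEnds {a b : G.V} (hB : G.BundleEnds a b)
    (he : G.Multiple e) : G.Multiple e' ↔ G.sameEnds e e' :=
  ⟨fun he' => sameEnds_of_joins ((hB e).mp he) ((hB e').mp he'), he.of_sameEnds⟩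

end Edges

section Components

variable {S T : Set G.El} {u v : G.V}

theorem adjIn.adj (h : G.adjIn S u v) : G.adj u v :=
  let ⟨_, _, e, he, _⟩ := h
  ⟨e, he⟩

theorem adjIn_symm (h : G.adjIn S u v) : G.adjIn S v u :=
  let ⟨hu, hv, e, he, hm⟩ := h
  ⟨hv, hu, e, Joins.symm he, hm⟩

theorem adjIn_mono (hST : S ⊆ T) (h : G.adjIn S u v) : G.adjIn T u v :=
  let ⟨hu, hv, e, he, hm⟩ := h
  ⟨hST hu, hST hv, e, he, fun hme => hST (hm hme)⟩

theorem adjIn_of_adj (hS : G.SemiInduced S) (h : G.adj u v) (hu : Sum.inl u ∈ S)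
    (hv : Sum.inl v ∈ S) : G.adjIn S u v := by
  obtain ⟨e, he : G.Joins e u v⟩ := h
  by_cases hm : G.Multiple e
  · have hends := (he.ends_iff (fun x => Sum.inl x ∈ S)).mpr ⟨hu, hv⟩
    obtain ⟨e', hee', he'S⟩ := hS.2 e hm hends.1 hends.2
    exact ⟨hu, hv, e', he.of_sameEnds hee', fun _ => he'S⟩
  · exact ⟨hu, hv, e, he, fun h => absurd h hm⟩

theorem reflTransGen_adjIn_symm (h : Relation.ReflTransGen (G.adjIn S) u v) :
    Relation.ReflTransGen (G.adjIn S) v u :=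
  haveI : Std.Symm (G.adjIn S) := ⟨fun _ _ => adjIn_symm⟩
  Std.Symm.symm _ _ h

theorem reflTransGen_adjIn_mono (hST : S ⊆ T) (h : Relation.ReflTransGen (G.adjIn S) u v) :
    Relation.ReflTransGen (G.adjIn T) u v :=
  Relation.ReflTransGen.mono (fun _ _ => adjIn_mono hST) _ _ h

theorem mem_of_reflTransGen_adjIn (hu : Sum.inl u ∈ S)
    (h : Relation.ReflTransGen (G.adjIn S) u v) : Sum.inl v ∈ S := by
  induction h with
  | refl => exact hu
  | tail _ h _ => exact h.2.1

theorem reflTransGen_fst_iff_snd (hS : G.SemiInduced S) {e : G.E} (he : Sum.inr e ∈ S) :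
    Relation.ReflTransGen (G.adjIn S) v (G.fst e) ↔
      Relation.ReflTransGen (G.adjIn S) v (G.snd e) := by
  have h : G.adjIn S (G.fst e) (G.snd e) :=
    ⟨(hS.1 e he).2.1, (hS.1 e he).2.2, e, joins_fst_snd e, fun _ => he⟩
  exact ⟨fun hv => hv.tail h, fun hv => hv.tail (adjIn_symm h)⟩

@[simp]
theorem mem_componentIn_inl : Sum.inl u ∈ G.componentIn S v ↔
    Relation.ReflTransGen (G.adjIn S) v u := by
  simp [componentIn]

@[simp]
theorem mem_componentIn_inr {e : G.E} : Sum.inr e ∈ G.componentIn S v ↔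
    Sum.inr e ∈ S ∧ Relation.ReflTransGen (G.adjIn S) v (G.fst e) := by
  simp [componentIn]

theorem componentIn_subset (hv : Sum.inl v ∈ S) : G.componentIn S v ⊆ S := by
  rintro (u | e) hx
  · exact mem_of_reflTransGen_adjIn hv (mem_componentIn_inl.mp hx)
  · exact (mem_componentIn_inr.mp hx).1

theorem reflTransGen_of_mem_componentIn {x : G.El} (hu : x ∈ G.componentIn S u)
    (hv : x ∈ G.componentIn S v) : Relation.ReflTransGen (G.adjIn S) v u := by
  rcases x with x | e
  · exact (mem_componentIn_inl.mp hv).trans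
      (reflTransGen_adjIn_symm (mem_componentIn_inl.mp hu))
  · exact (mem_componentIn_inr.mp hv).2.trans
      (reflTransGen_adjIn_symm (mem_componentIn_inr.mp hu).2)

theorem componentIn_subset_of_reflTransGen (h : Relation.ReflTransGen (G.adjIn S) v u) :
    G.componentIn S u ⊆ G.componentIn S v := by
  rintro (x | e) hx
  · exact mem_componentIn_inl.mpr (h.trans (mem_componentIn_inl.mp hx))
  · obtain ⟨he, hr⟩ := mem_componentIn_inr.mp hx
    exact mem_componentIn_inr.mpr ⟨he, h.trans hr⟩

theorem reflTransGen_or_exists_exit {J : Set G.El} (hS : G.SemiInduced S) (hu : Sum.inl u ∈ S)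
    (h : Relation.ReflTransGen (G.adjIn J) u v) :
    Relation.ReflTransGen (G.adjIn S) u v ∨
      ∃ x z, Relation.ReflTransGen (G.adjIn S) u x ∧ G.adjIn J x z ∧ Sum.inl z ∉ S := by
  have hmono : ∀ x y, G.adjIn J x y ∧ Sum.inl x ∈ S ∧ Sum.inl y ∈ S → G.adjIn S x y :=
    fun x y ⟨hxy, hx, hy⟩ => adjIn_of_adj hS hxy.adj hx hy
  rcases h.restrict_or_exists_exit (p := fun x => Sum.inl x ∈ S) hu with
    ⟨h, -⟩ | ⟨x, z, h, -, hxz, hz⟩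
  · exact Or.inl (Relation.ReflTransGen.mono hmono _ _ h)
  · exact Or.inr ⟨x, z, Relation.ReflTransGen.mono hmono _ _ h, hxz, hz⟩

end Components

section Parity

variable {A I K X : Set G.El} {v : G.V}

/-- The hypotheses say that `X` is a union of components of `I`. -/
theorem even_ncard_inter_of_closed
    (hev : ∀ v, Sum.inl v ∈ I → Even ((G.componentIn I v ∩ A).ncard))
    (hXI : X ⊆ I) (hadj : ∀ u w, Sum.inl u ∈ X → G.adjIn I u w → Sum.inl w ∈ X)
    (hedge : ∀ e, Sum.inr e ∈ I → (Sum.inr e ∈ X ↔ Sum.inl (G.fst e) ∈ X)) :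
    Even ((X ∩ A).ncard) := by
  induction hn : X.ncard using Nat.strong_induction_on generalizing X with
  | _ n ih =>
  by_cases hX : ∃ u, Sum.inl u ∈ X
  swap
  · have : X ∩ A = ∅ := by
      refine Set.eq_empty_of_forall_notMem fun x hx => hX ?_
      rcases x with u | e
      · exact ⟨u, hx.1⟩
      · exact ⟨_, (hedge e (hXI hx.1)).mp hx.1⟩
    simp [this]
  obtain ⟨u, hu⟩ := hX
  set C := G.componentIn I u
  have hC : ∀ w, Relation.ReflTransGen (G.adjIn I) u w → Sum.inl w ∈ X := by
    intro w hw
    induction hw with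
    | refl => exact hu
    | tail _ hstep ih' => exact hadj _ _ ih' hstep
  have hCX : C ⊆ X := by
    rintro (w | e) hx
    · exact hC w (mem_componentIn_inl.mp hx)
    · obtain ⟨he, hr⟩ := mem_componentIn_inr.mp hx
      exact (hedge e he).mpr (hC _ hr)
  have hlt : (X \ C).ncard < n :=
    hn ▸ Set.ncard_lt_ncard (Set.sdiff_ssubset_left_iff.mpr ⟨_, hu, mem_componentIn_inl.mpr .refl⟩)
  have hrest : Even (((X \ C) ∩ A).ncard) := by
    refine ih _ hlt (Set.sdiff_subset.trans hXI) ?_ ?_ rfl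
    · rintro w w' ⟨hwX, hwC⟩ hww'
      refine ⟨hadj _ _ hwX hww', fun hw'C => hwC ?_⟩
      exact mem_componentIn_inl.mpr ((mem_componentIn_inl.mp hw'C).tail (adjIn_symm hww'))
    · intro e he
      have heC : Sum.inr e ∈ C ↔ Sum.inl (G.fst e) ∈ C := by simp [C, he]
      simp only [Set.mem_sdiff, hedge e he, heC]
  have hsplit : X ∩ A = (C ∩ A) ∪ ((X \ C) ∩ A) := by
    rw [← Set.union_inter_distrib_right, Set.union_sdiff_cancel hCX]
  rw [hsplit, Set.ncard_union_eq (Set.disjoint_sdiff_right.mono Set.inter_subset_left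
    Set.inter_subset_left)]
  exact (hev u (hXI hu)).add hrest

/-- The old part of a component of `K` is a union of components of `I`, hence even. -/
theorem even_ncard_componentIn_inter_iff (hIK : I ⊆ K) (hI : G.AEvenMember A I)
    (hv : Sum.inl v ∈ K) :
    Even ((G.componentIn K v ∩ A).ncard) ↔ Even ((G.componentIn K v ∩ (K \ I) ∩ A).ncard) := by
  set C := G.componentIn K v
  have hold : Even ((C ∩ I ∩ A).ncard) := by
    refine even_ncard_inter_of_closed hI.2 Set.inter_subset_right ?_ ?_
    · rintro u w ⟨huC, -⟩ huw
      exact ⟨mem_componentIn_inl.mpr ((mem_componentIn_inl.mp huC).tail (adjIn_mono hIK huw)),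
        huw.2.1⟩
    · intro e he
      simp [C, he, hIK he, (hI.1.1 e he).2.1]
  have hsplit : C ∩ A = (C ∩ I ∩ A) ∪ (C ∩ (K \ I) ∩ A) := by
    have hCK : C ⊆ K := componentIn_subset hv
    ext x
    by_cases hxI : x ∈ I <;> simp only [Set.mem_inter_iff, Set.mem_union, Set.mem_sdiff, hxI] <;>
      grind
  have hdisj : Disjoint (C ∩ I ∩ A) (C ∩ (K \ I) ∩ A) :=
    Set.disjoint_left.mpr fun x hx hx' => hx'.1.2.2 hx.1.2
  rw [hsplit, Set.ncard_union_eq hdisj, Nat.even_add]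
  exact ⟨fun h => h.mp hold, fun h => iff_of_true hold h⟩

theorem even_ncard_componentIn_inter_of_subset {F : Set G.El} {a : G.V}
    (hF : F ⊆ G.componentIn K a) (hFA : Even ((F ∩ A).ncard)) (v : G.V) :
    Even ((G.componentIn K v ∩ F ∩ A).ncard) := by
  by_cases h : ∃ x ∈ F, x ∈ G.componentIn K v
  · obtain ⟨x, hxF, hxv⟩ := h
    have hsub : F ⊆ G.componentIn K v :=
      hF.trans (componentIn_subset_of_reflTransGen (reflTransGen_of_mem_componentIn (hF hxF) hxv))
    rwa [Set.inter_eq_right.mpr hsub]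
  · push Not at h
    have : G.componentIn K v ∩ F = ∅ :=
      Set.eq_empty_of_forall_notMem fun x hx => h x hx.2 hx.1
    simp [this]

end Parity

section SemiInduced

variable {A I J F : Set G.El} {a b : G.V}

theorem SemiInduced.union (hI : G.SemiInduced I)
    (hF : ∀ e, Sum.inr e ∈ F →
      G.Multiple e ∧ Sum.inl (G.fst e) ∈ I ∪ F ∧ Sum.inl (G.snd e) ∈ I ∪ F)
    (hF' : ∀ e, G.Multiple e → Sum.inl (G.fst e) ∈ I ∪ F → Sum.inl (G.snd e) ∈ I ∪ F →
      (Sum.inl (G.fst e) ∈ I ∧ Sum.inl (G.snd e) ∈ I) ∨ ∃ e', G.sameEnds e e' ∧ Sum.inr e' ∈ F) :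
    G.SemiInduced (I ∪ F) := by
  refine ⟨?_, fun e he hfst hsnd => ?_⟩
  · rintro e (heI | heF)
    · obtain ⟨hm, hfst, hsnd⟩ := hI.1 e heI
      exact ⟨hm, Or.inl hfst, Or.inl hsnd⟩
    · exact hF e heF
  · rcases hF' e he hfst hsnd with ⟨hfst, hsnd⟩ | ⟨e', hee', he'⟩
    · obtain ⟨e', hee', he'⟩ := hI.2 e he hfst hsnd
      exact ⟨e', hee', Or.inl he'⟩
    · exact ⟨e', hee', Or.inr he'⟩

theorem SemiInduced.union_of_ends_mem (hI : G.SemiInduced I) (hJ : G.SemiInduced J)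
    (hIJ : I ⊆ J) (hFJ : F ⊆ J)
    (hends : ∀ e, G.Multiple e → Sum.inl (G.fst e) ∈ J → Sum.inl (G.snd e) ∈ J →
      Sum.inl (G.fst e) ∈ I ∧ Sum.inl (G.snd e) ∈ I) :
    G.SemiInduced (I ∪ F) := by
  refine hI.union (fun e he => ?_) (fun e hm hfst hsnd => ?_)
  · obtain ⟨hm, hfst, hsnd⟩ := hJ.1 e (hFJ he)
    have := hends e hm hfst hsnd
    exact ⟨hm, Or.inl this.1, Or.inl this.2⟩
  · have hJ' := Set.union_subset hIJ hFJ
    exact Or.inl (hends e hm (hJ' hfst) (hJ' hsnd))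

theorem SemiInduced.union_of_bundleEnds (hB : G.BundleEnds a b) (hI : G.SemiInduced I)
    (hF : ∀ e, Sum.inr e ∈ F → G.Multiple e ∧ Sum.inl a ∈ I ∪ F ∧ Sum.inl b ∈ I ∪ F)
    (hab : Sum.inl a ∈ I ∪ F → Sum.inl b ∈ I ∪ F →
      (Sum.inl a ∈ I ∧ Sum.inl b ∈ I) ∨ ∃ e, G.Multiple e ∧ Sum.inr e ∈ F) :
    G.SemiInduced (I ∪ F) := by
  refine hI.union (fun e he => ?_) (fun e hm hfst hsnd => ?_)
  · obtain ⟨hm, hends⟩ := hF e he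
    exact ⟨hm, ((hB e).mp hm |>.ends_iff (fun x => Sum.inl x ∈ I ∪ F)).mpr hends⟩
  · have hjoin := (hB e).mp hm
    obtain ⟨ha, hb⟩ := (hjoin.ends_iff (fun x => Sum.inl x ∈ I ∪ F)).mp ⟨hfst, hsnd⟩
    rcases hab ha hb with hab | ⟨e', hm', he'⟩
    · exact Or.inl ((hjoin.ends_iff (fun x => Sum.inl x ∈ I)).mpr hab)
    · exact Or.inr ⟨e', sameEnds_of_joins hjoin ((hB e').mp hm'), he'⟩

theorem SemiInduced.union_of_notMem (hB : G.BundleEnds a b) (hI : G.SemiInduced I)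
    (hF : ∀ e, Sum.inr e ∉ F) (hab : Sum.inl a ∉ I ∪ F ∨ Sum.inl b ∉ I ∪ F) :
    G.SemiInduced (I ∪ F) :=
  hI.union_of_bundleEnds hB (fun e he => absurd he (hF e)) fun ha hb => by tauto

theorem AEvenMember.union (hI : G.AEvenMember A I) (hsi : G.SemiInduced (I ∪ F))
    (hFI : Disjoint F I) (hF : F ⊆ G.componentIn (I ∪ F) a) (hFA : Even ((F ∩ A).ncard)) :
    G.AEvenMember A (I ∪ F) := by
  refine ⟨hsi, fun v hv => ?_⟩
  rw [even_ncard_componentIn_inter_iff Set.subset_union_left hI hv, Set.union_sdiff_left,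
    hFI.sdiff_eq_left]
  exact even_ncard_componentIn_inter_of_subset hF hFA v

/-- By parity, the component of `w` in `J` contains a second new element of `A`; walk towards it
inside `I ∪ {w}`. -/
theorem exists_new_edge_or_exit {w : G.V} (hIJ : I ⊆ J) (hI : G.AEvenMember A I)
    (hJ : G.AEvenMember A J) (hw : Sum.inl w ∈ J \ I) (hwA : Sum.inl w ∈ A)
    (hS : G.SemiInduced (I ∪ {Sum.inl w})) :
    (∃ e, Sum.inr e ∈ J \ I ∧ Sum.inr e ∈ A ∧
        Relation.ReflTransGen (G.adjIn (I ∪ {Sum.inl w})) w (G.fst e)) ∨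
      ∃ x z, Relation.ReflTransGen (G.adjIn (I ∪ {Sum.inl w})) w x ∧ G.adjIn J x z ∧
        Sum.inl z ∉ I ∪ {Sum.inl w} := by
  set C := G.componentIn J w ∩ (J \ I) ∩ A
  have hwC : Sum.inl w ∈ C := ⟨⟨mem_componentIn_inl.mpr .refl, hw⟩, hwA⟩
  have hC : 1 < C.ncard := by
    obtain ⟨k, hk⟩ : Even C.ncard :=
      (even_ncard_componentIn_inter_iff hIJ hI hw.1).mp (hJ.2 w hw.1)
    have := (Set.ncard_pos (Set.toFinite _)).mpr ⟨_, hwC⟩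
    omega
  obtain ⟨y, ⟨⟨hyC, hyD⟩, hyA⟩, hyw⟩ := Set.exists_ne_of_one_lt_ncard hC (Sum.inl w)
  rcases y with y | e
  · rcases reflTransGen_or_exists_exit hS (by simp) (mem_componentIn_inl.mp hyC) with h | h
    · exact ((mem_of_reflTransGen_adjIn (by simp) h).elim hyD.2 hyw).elim
    · exact Or.inr h
  · obtain ⟨-, hr⟩ := mem_componentIn_inr.mp hyC
    rcases reflTransGen_or_exists_exit hS (by simp) hr with h | h
    · exact Or.inl ⟨e, hyD, hyA, h⟩
    · exact Or.inr h

end SemiInduced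

section Admissible

variable {A : Set G.El} {a b : G.V}

theorem aEvenMember_empty : G.AEvenMember A ∅ :=
  ⟨⟨fun _ h => absurd h (Set.notMem_empty _), fun _ _ h => absurd h (Set.notMem_empty _)⟩,
    fun _ h => absurd h (Set.notMem_empty _)⟩

/-- Once one bundle edge is reached from `v`, the whole (unique) bundle is. -/
theorem even_ncard_multiple_reachable (hA : G.Admissible A) (hB : G.BundleEnds a b) (v : G.V) :
    Even {e | G.Multiple e ∧ G.reachable v (G.fst e) ∧ Sum.inr e ∈ A}.ncard := by
  set Ev := {e | G.Multiple e ∧ G.reachable v (G.fst e) ∧ Sum.inr e ∈ A}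
  rcases Ev.eq_empty_or_nonempty with hE | ⟨e, he, hr, -⟩
  · simp [hE]
  have : Ev = {e' | G.sameEnds e e' ∧ Sum.inr e' ∈ A} := by
    ext e'
    refine ⟨fun ⟨he', _, hA'⟩ => ⟨(hB.multiple_iff_sameEnds he).mp he', hA'⟩, ?_⟩
    rintro ⟨hs, hA'⟩
    have hends : G.reachable v (G.fst e) ∧ G.reachable v (G.snd e) :=
      ⟨hr, hr.tail ⟨e, joins_fst_snd e⟩⟩
    exact ⟨he.of_sameEnds hs,
      ((sameEnds_iff_joins.mp hs).ends_iff (G.reachable v)).mpr hends |>.1, hA'⟩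
  rw [this]
  exact (hA.2.2.2 e he).2

theorem aEvenMember_topSet (hA : G.Admissible A) (hB : G.BundleEnds a b) :
    G.AEvenMember A G.topSet := by
  have hvert : ∀ u : G.V, Sum.inl u ∈ G.topSet := fun u e h => by cases h
  have hedge : ∀ e, Sum.inr e ∈ G.topSet ↔ G.Multiple e :=
    fun e => ⟨fun h => h e rfl, fun h e' he' => Sum.inr_injective he' ▸ h⟩
  have hsi : G.SemiInduced G.topSet :=
    ⟨fun e he => ⟨(hedge e).mp he, hvert _, hvert _⟩,
      fun e he _ _ => ⟨e, Or.inl ⟨rfl, rfl⟩, (hedge e).mpr he⟩⟩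
  have hreach : ∀ u v, Relation.ReflTransGen (G.adjIn G.topSet) u v ↔ G.reachable u v := by
    have : G.adjIn G.topSet = G.adj := funext₂ fun u v => propext
      ⟨adjIn.adj, fun h => adjIn_of_adj hsi h (hvert u) (hvert v)⟩
    simp [this, reachable]
  refine ⟨hsi, fun v _ => ?_⟩
  have hsplit : G.componentIn G.topSet v ∩ A =
      Sum.inl '' {u | G.reachable v u ∧ Sum.inl u ∈ A} ∪
        Sum.inr '' {e | G.Multiple e ∧ G.reachable v (G.fst e) ∧ Sum.inr e ∈ A} := by
    ext (u | e)
    · simp [hreach]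
    · simp [hreach, hedge]
      tauto
  rw [hsplit, Set.ncard_union_eq (by simp [Set.disjoint_left]),
    Set.ncard_image_of_injective _ Sum.inl_injective,
    Set.ncard_image_of_injective _ Sum.inr_injective]
  exact (hA.2.1 v).add (even_ncard_multiple_reachable hA hB v)

end Admissible

section RemoveEdges

variable {A J : Set G.El} {e₁ e₂ e₃ : G.E}

theorem even_ncard_componentIn_inter_pair (hJ : G.SemiInduced J) (h₁ : Sum.inr e₁ ∈ J)
    (h₂ : Sum.inr e₂ ∈ J) (h₁₂ : G.sameEnds e₁ e₂) (hne : e₁ ≠ e₂)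
    (hA : Sum.inr e₁ ∈ A ↔ Sum.inr e₂ ∈ A) (v : G.V) :
    Even ((G.componentIn J v ∩ {Sum.inr e₁, Sum.inr e₂} ∩ A).ncard) := by
  set C := G.componentIn J v
  have hconn : Sum.inr e₁ ∈ C ↔ Sum.inr e₂ ∈ C := by
    simp only [C, mem_componentIn_inr, h₁, h₂, true_and]
    rcases h₁₂ with ⟨hf, -⟩ | ⟨hf, -⟩
    · rw [hf]
    · rw [hf, reflTransGen_fst_iff_snd hJ h₂]
  by_cases h : Sum.inr e₁ ∈ C ∧ Sum.inr e₁ ∈ A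
  · have : C ∩ {Sum.inr e₁, Sum.inr e₂} ∩ A = {Sum.inr e₁, Sum.inr e₂} := by
      refine Set.Subset.antisymm (fun x hx => hx.1.2) ?_
      rintro x (rfl | rfl)
      exacts [⟨⟨h.1, by simp⟩, h.2⟩, ⟨⟨hconn.mp h.1, by simp⟩, hA.mp h.2⟩]
    rw [this, Set.ncard_pair (by simpa using hne)]
    exact even_two
  · have : C ∩ {Sum.inr e₁, Sum.inr e₂} ∩ A = ∅ := by
      refine Set.eq_empty_of_forall_notMem ?_
      rintro x ⟨⟨hxC, rfl | rfl⟩, hxA⟩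
      exacts [h ⟨hxC, hxA⟩, h ⟨hconn.mpr hxC, hA.mpr hxA⟩]
    simp [this]

theorem SemiInduced.sdiff_pair (hJ : G.SemiInduced J) (h₃ : Sum.inr e₃ ∈ J)
    (h₁₂ : G.sameEnds e₁ e₂) (h₁₃ : G.sameEnds e₁ e₃) (hne₁ : e₃ ≠ e₁) (hne₂ : e₃ ≠ e₂) :
    G.SemiInduced (J \ {Sum.inr e₁, Sum.inr e₂}) := by
  set P : Set G.El := {Sum.inr e₁, Sum.inr e₂}
  have hvert : ∀ u : G.V, Sum.inl u ∈ J \ P ↔ Sum.inl u ∈ J := fun u => by simp [P]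
  have hrepl : ∀ e, Sum.inr e ∈ J → ∃ e', G.sameEnds e e' ∧ Sum.inr e' ∈ J \ P := by
    intro e he
    by_cases heP : Sum.inr e ∈ P
    · refine ⟨e₃, ?_, h₃, by simp [P, hne₁, hne₂]⟩
      rcases heP with h | h <;> cases h
      exacts [h₁₃, sameEnds_trans (sameEnds_symm h₁₂) h₁₃]
    · exact ⟨e, Or.inl ⟨rfl, rfl⟩, he, heP⟩
  refine ⟨fun e he => ?_, fun e hm hfst hsnd => ?_⟩
  · obtain ⟨hm, hfst, hsnd⟩ := hJ.1 e he.1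
    exact ⟨hm, (hvert _).mpr hfst, (hvert _).mpr hsnd⟩
  · obtain ⟨e', hee', he'⟩ := hJ.2 e hm ((hvert _).mp hfst) ((hvert _).mp hsnd)
    obtain ⟨e'', he'e'', he''⟩ := hrepl e' he'
    exact ⟨e'', sameEnds_trans hee' he'e'', he''⟩

theorem adjIn_eq_of_subset {K : Set G.El} (hK : G.SemiInduced K) (hKJ : K ⊆ J)
    (hvert : ∀ u, Sum.inl u ∈ J → Sum.inl u ∈ K) : G.adjIn K = G.adjIn J :=
  funext₂ fun _ _ => propext
    ⟨adjIn_mono hKJ, fun h => adjIn_of_adj hK h.adj (hvert _ h.1) (hvert _ h.2.1)⟩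

/-- The third edge keeps every adjacency of `J`, so the components only lose the two removed
edges, which lie in the same component. -/
theorem AEvenMember.sdiff_pair (hJ : G.AEvenMember A J) (h₁ : Sum.inr e₁ ∈ J)
    (h₂ : Sum.inr e₂ ∈ J) (h₃ : Sum.inr e₃ ∈ J) (h₁₂ : G.sameEnds e₁ e₂)
    (h₁₃ : G.sameEnds e₁ e₃) (hne₁₂ : e₁ ≠ e₂) (hne₁ : e₃ ≠ e₁) (hne₂ : e₃ ≠ e₂)
    (hA : Sum.inr e₁ ∈ A ↔ Sum.inr e₂ ∈ A) :
    G.AEvenMember A (J \ {Sum.inr e₁, Sum.inr e₂}) := by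
  set P : Set G.El := {Sum.inr e₁, Sum.inr e₂}
  have hsi : G.SemiInduced (J \ P) := hJ.1.sdiff_pair h₃ h₁₂ h₁₃ hne₁ hne₂
  have hadj : G.adjIn (J \ P) = G.adjIn J :=
    adjIn_eq_of_subset hsi Set.sdiff_subset fun u hu => ⟨hu, by simp [P]⟩
  have hcomp : ∀ v, G.componentIn (J \ P) v = G.componentIn J v \ P := by
    intro v
    ext (u | e)
    · simp [hadj, P]
    · simp only [mem_componentIn_inr, hadj, Set.mem_sdiff]
      tauto
  refine ⟨hsi, fun v hv => ?_⟩
  have hsplit : G.componentIn J v ∩ A =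
      (G.componentIn J v \ P) ∩ A ∪ G.componentIn J v ∩ P ∩ A := by
    ext x
    by_cases x ∈ P <;> simp [*]
  have := hJ.2 v hv.1
  rw [hsplit, Set.ncard_union_eq (Set.disjoint_left.mpr fun x hx hx' => hx.1.2 hx'.1.2),
    Nat.even_add] at this
  rw [hcomp]
  exact this.mpr (even_ncard_componentIn_inter_pair hJ.1 h₁ h₂ h₁₂ hne₁₂ hA v)

end RemoveEdges

end Multigraph

namespace EvenPoset

open Multigraph

variable {G : Multigraph} {A : Set G.El} {I J : EvenPoset G A} {a b w : G.V}

theorem aEvenMember (hA : G.Admissible A) (hB : G.BundleEnds a b) (S : EvenPoset G A) :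
    G.AEvenMember A S.1 := by
  rcases S.2 with h | h | h
  · rw [h]
    exact aEvenMember_empty
  · rw [h]
    exact aEvenMember_topSet hA hB
  · exact h

theorem not_covBy_of_aEvenMember {K : Set G.El} (hK : G.AEvenMember A K) (hIK : I.1 ⊂ K)
    (hKJ : K ⊂ J.1) : ¬ I ⋖ J :=
  fun h => h.2 (c := ⟨K, Or.inr (Or.inr hK)⟩) hIK hKJ

theorem not_covBy_of_union {F : Set G.El} (hI : G.AEvenMember A I.1) (hFD : F ⊆ J.1 \ I.1)
    (hF : F.Nonempty) (hDF : ¬ J.1 \ I.1 ⊆ F) (hsi : G.SemiInduced (I.1 ∪ F))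
    (hconn : F ⊆ G.componentIn (I.1 ∪ F) a) (hFA : Even ((F ∩ A).ncard)) : ¬ I ⋖ J := by
  intro hcov
  have hFI : Disjoint F I.1 := Set.disjoint_left.mpr fun x hx => (hFD hx).2
  refine not_covBy_of_aEvenMember (hI.union hsi hFI hconn hFA) ?_ ?_ hcov
  · obtain ⟨x, hx⟩ := hF
    exact Set.ssubset_iff_of_subset Set.subset_union_left |>.mpr
      ⟨x, Or.inr hx, Set.disjoint_left.mp hFI hx⟩
  · refine Set.ssubset_iff_of_subset (Set.union_subset hcov.1.le fun x hx => (hFD hx).1) |>.mpr ?_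
    obtain ⟨x, hxD, hxF⟩ := Set.not_subset.mp hDF
    exact ⟨x, hxD.1, fun h => h.elim hxD.2 hxF⟩

theorem mem_of_covBy (hcov : I ⋖ J) (hI : G.AEvenMember A I.1) {x : G.El}
    (hx : x ∈ J.1 \ I.1) (hsi : G.SemiInduced (I.1 ∪ {x})) (hD : ∃ y ∈ J.1 \ I.1, y ≠ x) :
    x ∈ A := by
  by_contra hxA
  obtain ⟨a, hconn⟩ : ∃ a, {x} ⊆ G.componentIn (I.1 ∪ {x}) a := by
    rcases x with u | e
    · exact ⟨u, by simp [Relation.ReflTransGen.refl]⟩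
    · exact ⟨G.fst e, by simp [Relation.ReflTransGen.refl]⟩
  obtain ⟨y, hyD, hyx⟩ := hD
  refine not_covBy_of_union hI (by simpa using hx) (Set.singleton_nonempty x)
    (fun h => hyx (h hyD)) hsi hconn ?_ hcov
  simp [Set.singleton_inter_eq_empty.mpr hxA]

theorem not_covBy_of_pair (hI : G.AEvenMember A I.1) (h3 : 3 ≤ (J.1 \ I.1).ncard) {y : G.El}
    (hw : Sum.inl w ∈ J.1 \ I.1) (hy : y ∈ J.1 \ I.1) (hyw : y ≠ Sum.inl w) (hwA : Sum.inl w ∈ A)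
    (hyA : y ∈ A) (hsi : G.SemiInduced (I.1 ∪ {Sum.inl w, y}))
    (hconn : y ∈ G.componentIn (I.1 ∪ {Sum.inl w, y}) w) : ¬ I ⋖ J := by
  have hpair : ({Sum.inl w, y} : Set G.El).ncard = 2 := Set.ncard_pair hyw.symm
  refine not_covBy_of_union hI (Set.pair_subset hw hy) (Set.insert_nonempty _ _) (fun h => ?_)
    hsi (a := w) (Set.pair_subset (mem_componentIn_inl.mpr .refl) hconn) ?_
  · have := Set.ncard_le_ncard h
    omega
  · rw [Set.inter_eq_left.mpr (Set.pair_subset hwA hyA), hpair]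
    exact even_two

theorem not_covBy_of_exit (hI : G.AEvenMember A I.1) (h3 : 3 ≤ (J.1 \ I.1).ncard) {x z : G.V}
    (hw : Sum.inl w ∈ J.1 \ I.1) (hwA : Sum.inl w ∈ A) (hzA : Sum.inl z ∈ A)
    (hsi : G.SemiInduced (I.1 ∪ {Sum.inl w, Sum.inl z}))
    (hx : Relation.ReflTransGen (G.adjIn (I.1 ∪ {Sum.inl w})) w x) (hxz : G.adjIn J.1 x z)
    (hz : Sum.inl z ∉ I.1 ∪ {Sum.inl w}) : ¬ I ⋖ J := by
  have hST : I.1 ∪ {Sum.inl w} ⊆ I.1 ∪ {Sum.inl w, Sum.inl z} :=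
    Set.union_subset_union_right _ (by simp)
  have hxT := hST (mem_of_reflTransGen_adjIn (by simp) hx)
  simp only [Set.mem_union, Set.mem_singleton_iff, Sum.inl.injEq, not_or] at hz
  refine not_covBy_of_pair hI h3 hw ⟨hxz.2.1, hz.1⟩ (by simpa using hz.2) hwA hzA hsi ?_
  exact mem_componentIn_inl.mpr
    ((reflTransGen_adjIn_mono hST hx).tail (adjIn_of_adj hsi hxz.adj hxT (by simp)))

/-- Every part of `J ∖ I` can then be added to `I`, so all new elements lie in `A`. -/
theorem not_covBy_of_ends_mem (hI : G.AEvenMember A I.1) (hJ : G.AEvenMember A J.1)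
    (h3 : 3 ≤ (J.1 \ I.1).ncard)
    (hends : ∀ e, G.Multiple e → Sum.inl (G.fst e) ∈ J.1 → Sum.inl (G.snd e) ∈ J.1 →
      Sum.inl (G.fst e) ∈ I.1 ∧ Sum.inl (G.snd e) ∈ I.1)
    (hw : Sum.inl w ∈ J.1 \ I.1) : ¬ I ⋖ J := by
  intro hcov
  have hIJ : I.1 ⊆ J.1 := hcov.1.le
  have hsi : ∀ F ⊆ J.1 \ I.1, G.SemiInduced (I.1 ∪ F) := fun F hF =>
    hI.1.union_of_ends_mem hJ.1 hIJ (hF.trans Set.sdiff_subset) hends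
  have hA : ∀ x ∈ J.1 \ I.1, x ∈ A := fun x hx =>
    mem_of_covBy hcov hI hx (hsi _ (by simpa using hx))
      (Set.exists_ne_of_one_lt_ncard (by omega) x)
  have hwA := hA _ hw
  rcases exists_new_edge_or_exit hIJ hI hJ hw hwA (hsi _ (by simpa using hw)) with
    ⟨e, he, heA, hr⟩ | ⟨x, z, hx, hxz, hz⟩
  · refine not_covBy_of_pair hI h3 hw he (by simp) hwA heA (hsi _ (Set.pair_subset hw he))
      ?_ hcov
    exact mem_componentIn_inr.mpr ⟨by simp, reflTransGen_adjIn_mono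
      (Set.union_subset_union_right _ (by simp)) hr⟩
  · have hzD : Sum.inl z ∈ J.1 \ I.1 := ⟨hxz.2.1, fun h => hz (Or.inl h)⟩
    exact not_covBy_of_exit hI h3 hw hwA (hA _ hzD) (hsi _ (Set.pair_subset hw hzD)) hx hxz hz
      hcov

theorem ncard_diff_inter_multiple_le_two (hB : G.BundleEnds a b) (hJ : G.AEvenMember A J.1)
    (hcov : I ⋖ J) :
    ((J.1 \ I.1) ∩ {x : G.El | ∃ e, x = Sum.inr e ∧ G.Multiple e}).ncard ≤ 2 := by
  by_contra! h
  obtain ⟨_, _, _, ⟨h₁, e₁, rfl, hm₁⟩, ⟨h₂, e₂, rfl, hm₂⟩, ⟨h₃, e₃, rfl, hm₃⟩, h₁₂, h₁₃, h₂₃⟩ :=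
    (Set.two_lt_ncard_iff (Set.toFinite _)).mp h
  simp only [ne_eq, Sum.inr.injEq] at h₁₂ h₁₃ h₂₃
  have hsame : ∀ {e e'}, G.Multiple e → G.Multiple e' → G.sameEnds e e' :=
    fun hm hm' => sameEnds_of_joins ((hB _).mp hm) ((hB _).mp hm')
  -- two of the three new edges have the same status; removing them from `J` contradicts the cover
  have key : ∀ {e e' e''}, Sum.inr e ∈ J.1 \ I.1 → Sum.inr e' ∈ J.1 \ I.1 →
      Sum.inr e'' ∈ J.1 \ I.1 → G.Multiple e → G.Multiple e' → G.Multiple e'' → e ≠ e' →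
      e'' ≠ e → e'' ≠ e' → (Sum.inr e ∈ A ↔ Sum.inr e' ∈ A) → False := by
    intro e e' e'' h h' h'' hm hm' hm'' hne hne₁ hne₂ hA
    refine not_covBy_of_aEvenMember (hJ.sdiff_pair h.1 h'.1 h''.1 (hsame hm hm')
      (hsame hm hm'') hne hne₁ hne₂ hA) ?_ ?_ hcov
    · have hIK : I.1 ⊆ J.1 \ {Sum.inr e, Sum.inr e'} := by
        refine fun x hx => ⟨hcov.1.le hx, ?_⟩
        rintro (rfl | rfl)
        exacts [h.2 hx, h'.2 hx]
      exact (Set.ssubset_iff_of_subset hIK).mpr ⟨_, ⟨h''.1, by simp [hne₁, hne₂]⟩, h''.2⟩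
    · exact Set.ssubset_iff_of_subset Set.sdiff_subset |>.mpr ⟨_, h.1, fun hx => hx.2 (by simp)⟩
  by_cases hA₁₂ : Sum.inr e₁ ∈ A ↔ Sum.inr e₂ ∈ A
  · exact key h₁ h₂ h₃ hm₁ hm₂ hm₃ h₁₂ (Ne.symm h₁₃) (Ne.symm h₂₃) hA₁₂
  by_cases hA₁₃ : Sum.inr e₁ ∈ A ↔ Sum.inr e₃ ∈ A
  · exact key h₁ h₃ h₂ hm₁ hm₃ hm₂ h₁₃ (Ne.symm h₁₂) h₂₃ hA₁₃
  · exact key h₂ h₃ h₁ hm₂ hm₃ hm₁ h₂₃ h₁₂ h₁₃ (by tauto)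

theorem diff_inter_multiple_nonempty (hI : G.AEvenMember A I.1) (hJ : G.AEvenMember A J.1)
    (hcov : I ⋖ J) (h3 : 3 ≤ (J.1 \ I.1).ncard) :
    ((J.1 \ I.1) ∩ {x : G.El | ∃ e, x = Sum.inr e ∧ G.Multiple e}).Nonempty := by
  by_contra h
  have hold : ∀ e, Sum.inr e ∈ J.1 → Sum.inr e ∈ I.1 := fun e he => by
    by_contra hI'
    exact h ⟨_, ⟨he, hI'⟩, e, rfl, (hJ.1.1 e he).1⟩
  have hends : ∀ e, G.Multiple e → Sum.inl (G.fst e) ∈ J.1 → Sum.inl (G.snd e) ∈ J.1 →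
      Sum.inl (G.fst e) ∈ I.1 ∧ Sum.inl (G.snd e) ∈ I.1 := by
    intro e hm hfst hsnd
    obtain ⟨e', hee', he'⟩ := hJ.1.2 e hm hfst hsnd
    exact ((sameEnds_iff_joins.mp hee').ends_iff (fun x => Sum.inl x ∈ I.1)).mp
      (hI.1.1 e' (hold e' he')).2
  obtain ⟨x, hx⟩ := Set.nonempty_of_ncard_ne_zero (s := J.1 \ I.1) (by omega)
  rcases x with w | e
  · exact not_covBy_of_ends_mem hI hJ h3 hends hx hcov
  · exact hx.2 (hold e hx.1)

/-- The new edges are exactly the new bundle edges. -/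
def newBundlePart (I J : EvenPoset G A) (a : G.V) : Set G.El :=
  insert (Sum.inl a) ((J.1 \ I.1) ∩ Set.range Sum.inr)

section OneEndNew

variable {e₀ : G.E} {F : Set G.El}

theorem newBundlePart_subset (ha : Sum.inl a ∈ J.1 \ I.1) :
    newBundlePart I J a ⊆ J.1 \ I.1 :=
  Set.insert_subset ha Set.inter_subset_left

theorem adjIn_union_newBundlePart (hB : G.BundleEnds a b) (hJ : G.AEvenMember A J.1)
    (hb : Sum.inl b ∈ I.1) (he₀ : Sum.inr e₀ ∈ J.1 \ I.1) {T : Set G.El}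
    (hT : I.1 ∪ newBundlePart I J a ⊆ T) : G.adjIn T b a :=
  ⟨hT (Or.inl hb), hT (Or.inr (Set.mem_insert _ _)), e₀,
    ((hB e₀).mp (hJ.1.1 e₀ he₀.1).1).symm, fun _ => hT (Or.inr (Or.inr ⟨he₀, e₀, rfl⟩))⟩

theorem semiInduced_union_of_newBundlePart_subset (hB : G.BundleEnds a b)
    (hI : G.AEvenMember A I.1) (hJ : G.AEvenMember A J.1) (hb : Sum.inl b ∈ I.1)
    (he₀ : Sum.inr e₀ ∈ J.1 \ I.1) (hF : newBundlePart I J a ⊆ F) (hFJ : F ⊆ J.1) :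
    G.SemiInduced (I.1 ∪ F) :=
  hI.1.union_of_bundleEnds hB
    (fun e he => ⟨(hJ.1.1 e (hFJ he)).1, Or.inr (hF (Set.mem_insert _ _)), Or.inl hb⟩)
    fun _ _ => Or.inr ⟨e₀, (hJ.1.1 e₀ he₀.1).1, hF (Or.inr ⟨he₀, e₀, rfl⟩)⟩

theorem newBundlePart_subset_componentIn (hB : G.BundleEnds a b) (hJ : G.AEvenMember A J.1)
    (hb : Sum.inl b ∈ I.1) (he₀ : Sum.inr e₀ ∈ J.1 \ I.1) (hF : newBundlePart I J a ⊆ F) :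
    newBundlePart I J a ⊆ G.componentIn (I.1 ∪ F) b := by
  have hT : I.1 ∪ newBundlePart I J a ⊆ I.1 ∪ F := Set.union_subset_union_right _ hF
  have hba := adjIn_union_newBundlePart hB hJ hb he₀ hT
  rintro x (rfl | ⟨hxD, e, rfl⟩)
  · exact mem_componentIn_inl.mpr (.single hba)
  · refine mem_componentIn_inr.mpr ⟨hT (Or.inr (Or.inr ⟨hxD, e, rfl⟩)), ?_⟩
    rcases (hB e).mp (hJ.1.1 e hxD.1).1 with ⟨h, -⟩ | ⟨h, -⟩
    · rw [h]
      exact .single hba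
    · rw [h]

/-- The new end `a` and the new edges can only be added to `I` together, so they meet `A`
oddly. -/
theorem not_even_ncard_newBundlePart_inter (hB : G.BundleEnds a b) (hI : G.AEvenMember A I.1)
    (hJ : G.AEvenMember A J.1) (hcov : I ⋖ J) (ha : Sum.inl a ∈ J.1 \ I.1)
    (hb : Sum.inl b ∈ I.1) (he₀ : Sum.inr e₀ ∈ J.1 \ I.1) (hw : Sum.inl w ∈ J.1 \ I.1)
    (hwa : w ≠ a) : ¬ Even ((newBundlePart I J a ∩ A).ncard) := fun hev =>
  not_covBy_of_union hI (newBundlePart_subset ha) (Set.insert_nonempty _ _)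
    (fun h => by simpa [newBundlePart, hwa] using h hw)
    (semiInduced_union_of_newBundlePart_subset hB hI hJ hb he₀ subset_rfl
      ((newBundlePart_subset ha).trans Set.sdiff_subset))
    (newBundlePart_subset_componentIn hB hJ hb he₀ subset_rfl) hev hcov

/-- `insert w (newBundlePart I J a)` meets `A` in `1 + odd` elements. -/
theorem not_covBy_of_reflTransGen_newBundlePart (hB : G.BundleEnds a b)
    (hI : G.AEvenMember A I.1) (hJ : G.AEvenMember A J.1) (ha : Sum.inl a ∈ J.1 \ I.1)
    (hb : Sum.inl b ∈ I.1) (he₀ : Sum.inr e₀ ∈ J.1 \ I.1) {w' : G.V}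
    (hw : Sum.inl w ∈ J.1 \ I.1) (hw' : Sum.inl w' ∈ J.1 \ I.1) (hww' : w ≠ w') (hwa : w ≠ a)
    (hw'a : w' ≠ a) (hwA : Sum.inl w ∈ A)
    (hr : Relation.ReflTransGen (G.adjIn (I.1 ∪ insert (Sum.inl w) (newBundlePart I J a))) w b) :
    ¬ I ⋖ J := by
  intro hcov
  have hwF : Sum.inl w ∉ newBundlePart I J a := by simp [newBundlePart, hwa]
  have hFD := newBundlePart_subset ha
  refine not_covBy_of_union hI (Set.insert_subset hw hFD) (Set.insert_nonempty _ _) ?_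
    (semiInduced_union_of_newBundlePart_subset hB hI hJ hb he₀ (Set.subset_insert _ _)
      (Set.insert_subset hw.1 (hFD.trans Set.sdiff_subset)))
    (a := b) (Set.insert_subset (mem_componentIn_inl.mpr (reflTransGen_adjIn_symm hr))
      (newBundlePart_subset_componentIn hB hJ hb he₀ (Set.subset_insert _ _))) ?_ hcov
  · intro h
    rcases h hw' with h | h
    · exact hww' (Sum.inl_injective h).symm
    · simp [newBundlePart, hw'a] at h
  · rw [Set.insert_inter_of_mem hwA, Set.ncard_insert_of_notMem (fun h => hwF h.1)]
    exact Nat.even_add_one.mpr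
      (not_even_ncard_newBundlePart_inter hB hI hJ hcov ha hb he₀ hw hwa)

theorem not_covBy_of_one_end_new (hB : G.BundleEnds a b) (hI : G.AEvenMember A I.1)
    (hJ : G.AEvenMember A J.1) (h3 : 3 ≤ (J.1 \ I.1).ncard) (ha : Sum.inl a ∈ J.1 \ I.1)
    (hb : Sum.inl b ∈ I.1) (he₀ : Sum.inr e₀ ∈ J.1 \ I.1) {w' : G.V}
    (hw : Sum.inl w ∈ J.1 \ I.1) (hw' : Sum.inl w' ∈ J.1 \ I.1) (hww' : w ≠ w') (hwa : w ≠ a)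
    (hw'a : w' ≠ a) : ¬ I ⋖ J := by
  intro hcov
  set T := I.1 ∪ insert (Sum.inl w) (newBundlePart I J a)
  have hFT : I.1 ∪ newBundlePart I J a ⊆ T := Set.union_subset_union_right _ (Set.subset_insert _ _)
  have hST : I.1 ∪ {Sum.inl w} ⊆ T := Set.union_subset_union_right _ (by simp)
  have hS : G.SemiInduced (I.1 ∪ {Sum.inl w}) :=
    hI.1.union_of_notMem hB (by simp) (Or.inl (by simp [hwa.symm, ha.2]))
  have hwA : Sum.inl w ∈ A := mem_of_covBy hcov hI hw hS ⟨_, ha, by simpa using hwa.symm⟩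
  have hbig := not_covBy_of_reflTransGen_newBundlePart hB hI hJ ha hb he₀ hw hw' hww' hwa hw'a hwA
  rcases exists_new_edge_or_exit hcov.1.le hI hJ hw hwA hS with
    ⟨e, he, -, hr⟩ | ⟨x, z, hx, hxz, hz⟩
  · have hfst := mem_of_reflTransGen_adjIn (by simp) hr
    rcases (hB e).mp (hJ.1.1 e he.1).1 with ⟨h, -⟩ | ⟨h, -⟩ <;> rw [h] at hfst hr
    · simp [hwa.symm, ha.2] at hfst
    · exact hbig (reflTransGen_adjIn_mono hST hr) hcov
  have hxT := hST (mem_of_reflTransGen_adjIn (by simp) hx)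
  by_cases hza : z = a
  · subst hza
    have hsiT := semiInduced_union_of_newBundlePart_subset hB hI hJ hb he₀ (Set.subset_insert _ _)
      (Set.insert_subset hw.1 ((newBundlePart_subset ha).trans Set.sdiff_subset))
    refine hbig (.tail ((reflTransGen_adjIn_mono hST hx).tail ?_)
      (adjIn_symm (adjIn_union_newBundlePart hB hJ hb he₀ hFT))) hcov
    exact adjIn_of_adj hsiT hxz.adj hxT (hFT (Or.inr (Set.mem_insert _ _)))
  have hzD : Sum.inl z ∈ J.1 \ I.1 := ⟨hxz.2.1, fun h => hz (Or.inl h)⟩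
  have hzA : Sum.inl z ∈ A := by
    have hS := hI.1.union_of_notMem hB (F := {Sum.inl z}) (by simp)
      (Or.inl (by simp [Ne.symm hza, ha.2]))
    exact mem_of_covBy hcov hI hzD hS ⟨_, ha, by simpa using Ne.symm hza⟩
  refine not_covBy_of_exit hI h3 hw hwA hzA ?_ hx hxz hz hcov
  exact hI.1.union_of_notMem hB (by simp) (Or.inl (by simp [hwa.symm, Ne.symm hza, ha.2]))

end OneEndNew

theorem not_covBy_of_both_ends_new (hB : G.BundleEnds a b) (hab : a ≠ b)
    (hI : G.AEvenMember A I.1) (hJ : G.AEvenMember A J.1) (h3 : 3 ≤ (J.1 \ I.1).ncard)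
    (ha : Sum.inl a ∈ J.1 \ I.1) (hb : Sum.inl b ∈ J.1 \ I.1) (hw : Sum.inl w ∈ J.1 \ I.1)
    (hwa : w ≠ a) (hwb : w ≠ b) : ¬ I ⋖ J := by
  intro hcov
  have hne : ∀ z, z ≠ a ∨ z ≠ b := fun z => by
    by_contra! h
    exact hab (h.1.symm.trans h.2)
  have hsi : ∀ z, G.SemiInduced (I.1 ∪ {Sum.inl w, Sum.inl z}) := by
    intro z
    rcases hne z with hz | hz
    · exact hI.1.union_of_notMem hB (by simp) (Or.inl (by simp [hwa.symm, Ne.symm hz, ha.2]))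
    · exact hI.1.union_of_notMem hB (by simp) (Or.inr (by simp [hwb.symm, Ne.symm hz, hb.2]))
  have hA : ∀ z, Sum.inl z ∈ J.1 \ I.1 → Sum.inl z ∈ A := by
    intro z hz
    have hS : G.SemiInduced (I.1 ∪ {Sum.inl z}) := by
      rcases hne z with h | h
      · exact hI.1.union_of_notMem hB (by simp) (Or.inl (by simp [Ne.symm h, ha.2]))
      · exact hI.1.union_of_notMem hB (by simp) (Or.inr (by simp [Ne.symm h, hb.2]))
    refine mem_of_covBy hcov hI hz hS ?_
    by_cases hza : z = a
    · exact ⟨_, hb, by simp [hza, Ne.symm hab]⟩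
    · exact ⟨_, ha, by simp [Ne.symm hza]⟩
  have hS := hsi w
  rw [Set.pair_eq_singleton] at hS
  rcases exists_new_edge_or_exit hcov.1.le hI hJ hw (hA w hw) hS with
    ⟨e, he, -, hr⟩ | ⟨x, z, hx, hxz, hz⟩
  · have hfst := mem_of_reflTransGen_adjIn (by simp) hr
    rcases (hB e).mp (hJ.1.1 e he.1).1 with ⟨h, -⟩ | ⟨h, -⟩ <;> rw [h] at hfst
    · simp [hwa.symm, ha.2] at hfst
    · simp [hwb.symm, hb.2] at hfst
  · have hzD : Sum.inl z ∈ J.1 \ I.1 := ⟨hxz.2.1, fun h => hz (Or.inl h)⟩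
    exact not_covBy_of_exit hI h3 hw (hA w hw) (hA z hzD) (hsi z) hx hxz hz hcov

theorem ncard_diff_inter_inner_le_one (hB : G.BundleEnds a b) (hab : a ≠ b)
    (hI : G.AEvenMember A I.1) (hJ : G.AEvenMember A J.1) (hcov : I ⋖ J)
    (h3 : 3 ≤ (J.1 \ I.1).ncard) :
    ((J.1 \ I.1) ∩ {x : G.El | ∃ w, x = Sum.inl w ∧ w ≠ a ∧ w ≠ b}).ncard ≤ 1 := by
  by_contra! h
  obtain ⟨_, _, ⟨hw, w, rfl, hwa, hwb⟩, ⟨hw', w', rfl, hw'a, hw'b⟩, hww'⟩ :=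
    (Set.one_lt_ncard_iff (Set.toFinite _)).mp h
  simp only [ne_eq, Sum.inl.injEq] at hww'
  obtain ⟨_, he₀, e₀, rfl, hm₀⟩ := diff_inter_multiple_nonempty hI hJ hcov h3
  obtain ⟨haJ, hbJ⟩ :=
    ((hB e₀).mp hm₀).ends_iff (fun x => Sum.inl x ∈ J.1) |>.mp (hJ.1.1 e₀ he₀.1).2
  by_cases haI : Sum.inl a ∈ I.1 <;> by_cases hbI : Sum.inl b ∈ I.1
  · refine not_covBy_of_ends_mem hI hJ h3 (fun e hm _ _ => ?_) hw hcov
    exact ((hB e).mp hm).ends_iff (fun x => Sum.inl x ∈ I.1) |>.mpr ⟨haI, hbI⟩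
  · exact not_covBy_of_one_end_new hB.symm hI hJ h3 ⟨hbJ, hbI⟩ haI he₀ hw hw' hww' hwb hw'b hcov
  · exact not_covBy_of_one_end_new hB hI hJ h3 ⟨haJ, haI⟩ hbI he₀ hw hw' hww' hwa hw'a hcov
  · exact not_covBy_of_both_ends_new hB hab hI hJ h3 ⟨haJ, haI⟩ ⟨hbJ, hbI⟩ hw hwa hwb hcov

theorem ncard_diff_inter_vertices_le_two (hB : G.BundleEnds a b) (hab : a ≠ b)
    (hI : G.AEvenMember A I.1) (hJ : G.AEvenMember A J.1) (hcov : I ⋖ J)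
    (h3 : 3 ≤ (J.1 \ I.1).ncard) :
    ((J.1 \ I.1) ∩ {x : G.El | ∃ w, x = Sum.inl w}).ncard ≤ 2 := by
  set D := J.1 \ I.1
  set W := D ∩ {x : G.El | ∃ w, x = Sum.inl w ∧ w ≠ a ∧ w ≠ b}
  set E := D ∩ {Sum.inl a, Sum.inl b}
  have hW : W.ncard ≤ 1 := ncard_diff_inter_inner_le_one hB hab hI hJ hcov h3
  have hsub : D ∩ {x : G.El | ∃ w, x = Sum.inl w} ⊆ W ∪ E := by
    rintro _ ⟨hD, w, rfl⟩
    by_cases hwa : w = a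
    · exact Or.inr ⟨hD, by simp [hwa]⟩
    by_cases hwb : w = b
    · exact Or.inr ⟨hD, by simp [hwb]⟩
    exact Or.inl ⟨hD, w, rfl, hwa, hwb⟩
  have hE : E.ncard ≤ 2 := (Set.ncard_le_ncard Set.inter_subset_right).trans
    ((Set.ncard_insert_le _ _).trans (by simp))
  by_contra! h
  have hcard := (Set.ncard_le_ncard hsub).trans (Set.ncard_union_le W E)
  have hEab : E = {Sum.inl a, Sum.inl b} := Set.eq_of_subset_of_ncard_le Set.inter_subset_right
    ((Set.ncard_pair (by simpa using hab)).trans_le (by omega))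
  obtain ⟨_, hwD, w, rfl, hwa, hwb⟩ := Set.nonempty_of_ncard_ne_zero (s := W) (by omega)
  have ha : Sum.inl a ∈ D := (hEab ▸ Set.mem_insert _ _ : Sum.inl a ∈ E).1
  have hb : Sum.inl b ∈ D := (hEab ▸ Set.mem_insert_of_mem _ rfl : Sum.inl b ∈ E).1
  exact not_covBy_of_both_ends_new hB hab hI hJ h3 ha hb hwD hwa hwb hcov

end EvenPoset

theorem cover_diff_counts_general (G : Multigraph) (A : Set G.El)
    (hA : G.Admissible A) (L : StdLabeling G A)
    (I J : EvenPoset G A) (hcov : I ⋖ J)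
    (h3 : 3 ≤ (J.1 \ I.1).ncard) :
    (1 ≤ ((J.1 \ I.1) ∩ {x : G.El | ∃ w, x = Sum.inl w}).ncard ∧
      ((J.1 \ I.1) ∩ {x : G.El | ∃ w, x = Sum.inl w}).ncard ≤ 2) ∧
    ((J.1 \ I.1) ∩ {x : G.El | ∃ w, x = Sum.inl w ∧ w ≠ L.v 1 ∧ w ≠ L.v 2}).ncard ≤ 1 ∧
    (1 ≤ ((J.1 \ I.1) ∩ {x : G.El | ∃ e, x = Sum.inr e ∧ G.Multiple e}).ncard ∧
      ((J.1 \ I.1) ∩ {x : G.El | ∃ e, x = Sum.inr e ∧ G.Multiple e}).ncard ≤ 2) := by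
  have hB : G.BundleEnds (L.v 1) (L.v 2) := L.bundleEnds
  have hab : L.v 1 ≠ L.v 2 := by
    have := L.hn
    exact L.vbij.injOn.ne ⟨le_rfl, by omega⟩ ⟨by omega, this⟩ (by omega)
  have hI := EvenPoset.aEvenMember hA hB I
  have hJ := EvenPoset.aEvenMember hA hB J
  have hedges := EvenPoset.ncard_diff_inter_multiple_le_two hB hJ hcov
  have hsplit : (J.1 \ I.1).ncard ≤ ((J.1 \ I.1) ∩ {x : G.El | ∃ w, x = Sum.inl w}).ncard +
      ((J.1 \ I.1) ∩ {x : G.El | ∃ e, x = Sum.inr e ∧ G.Multiple e}).ncard := by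
    refine (Set.ncard_le_ncard fun x hx => ?_).trans (Set.ncard_union_le _ _)
    rcases x with w | e
    · exact Or.inl ⟨hx, w, rfl⟩
    · exact Or.inr ⟨hx, e, rfl, (hJ.1.1 e hx.1).1⟩
  refine ⟨⟨by omega, EvenPoset.ncard_diff_inter_vertices_le_two hB hab hI hJ hcov h3⟩,
    EvenPoset.ncard_diff_inter_inner_le_one hB hab hI hJ hcov h3, ?_, hedges⟩
  exact (Set.ncard_pos (Set.toFinite _)).mpr (EvenPoset.diff_inter_multiple_nonempty hI hJ hcov h3)

/-- For a graph `G` of the list `L` with the standard labeling and `A ∈ 𝒜(G)`, every cover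
`I ⋖ J` of `P^even_{G,A}` with `|J ∖ I| ≥ 3` satisfies `1 ≤ |(J∖I) ∩ V| ≤ 2`,
`|(J∖I) ∩ (V ∖ {1,2})| ≤ 1` and `1 ≤ |(J∖I) ∩ B| ≤ 2`. -/
theorem cover_diff_counts (G : Multigraph) (A : Set G.El)
    (hL : InListL G) (hA : G.Admissible A) (L : StdLabeling G A)
    (I J : EvenPoset G A) (hcov : I ⋖ J)
    (h3 : 3 ≤ (J.1 \ I.1).ncard) :
    (1 ≤ ((J.1 \ I.1) ∩ {x : G.El | ∃ w, x = Sum.inl w}).ncard ∧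
      ((J.1 \ I.1) ∩ {x : G.El | ∃ w, x = Sum.inl w}).ncard ≤ 2) ∧
    ((J.1 \ I.1) ∩ {x : G.El | ∃ w, x = Sum.inl w ∧ w ≠ L.v 1 ∧ w ≠ L.v 2}).ncard ≤ 1 ∧
    (1 ≤ ((J.1 \ I.1) ∩ {x : G.El | ∃ e, x = Sum.inr e ∧ G.Multiple e}).ncard ∧
      ((J.1 \ I.1) ∩ {x : G.El | ∃ e, x = Sum.inr e ∧ G.Multiple e}).ncard ≤ 2) :=
  cover_diff_counts_general G A hA L I J hcov h3
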